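/- arXiv:2002.02905 — 2 statements merged into one kernel-verified Lean document; each statement's English description precedes it below -/
import Mathlib

section
/- Let H = ℓ²(ℕ*) and let A be the diagonal operator with Ae_n = e_n/n!. Then the backward shift T (Te_1 = 0, Te_n = e_{n-1} for n ≥ 2) is bounded but not A-bounded; i.e., there is no λ > 0 with ‖A^{1/2}Tx‖ ≤ λ‖A^{1/2}x‖ for all x. -/
/-!
The basis vector `e (n + 1)` has `‖e (n + 1)‖_A = ((n + 2)!)^{-1/2}` while its image `e n` under the
backward shift has `‖e n‖_A = ((n + 1)!)^{-1/2}`, so `T` stretches the `A`-seminorm of `e (n + 1)`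
by the unbounded factor `√(n + 2)`.
-/

open ContinuousLinearMap

variable {H : Type*} [NormedAddCommGroup H] [InnerProductSpace ℂ H] [CompleteSpace H]

/-- The seminorm `‖x‖_A = ‖A^{1/2} x‖ = √⟨Ax, x⟩` induced by a positive operator `A`. -/
noncomputable def anorm (A : H →L[ℂ] H) (x : H) : ℝ :=
  Real.sqrt (A.reApplyInnerSelf x)

/-- `T` is `A`-bounded: `‖Tx‖_A ≤ c ‖x‖_A` for some `c > 0`. -/
def ABounded (A T : H →L[ℂ] H) : Prop :=
  ∃ c : ℝ, 0 < c ∧ ∀ x : H, anorm A (T x) ≤ c * anorm A x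

/-- The operator seminorm `‖T‖_A`: the least `c ≥ 0` with `‖Tx‖_A ≤ c ‖x‖_A` for all `x`. -/
noncomputable def aNorm (A T : H →L[ℂ] H) : ℝ :=
  sInf {c : ℝ | 0 ≤ c ∧ ∀ x : H, anorm A (T x) ≤ c * anorm A x}

/-- The `A`-spectral radius `r_A(T) = inf_{n ≥ 1} ‖T^n‖_A^{1/n}`. -/
noncomputable def aSpecRad (A T : H →L[ℂ] H) : ℝ :=
  ⨅ n : ℕ+, aNorm A (T ^ (n : ℕ)) ^ ((n : ℝ)⁻¹)

/-- The `A`-numerical radius `ω_A(T) = sup {|⟨ATx, x⟩| : ‖x‖_A = 1}`. -/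
noncomputable def aNumRad (A T : H →L[ℂ] H) : ℝ :=
  sSup {c : ℝ | ∃ x : H, anorm A x = 1 ∧ c = ‖(inner ℂ (A (T x)) x : ℂ)‖}

instance : Fact ((1 : ENNReal) ≤ 2) := ⟨one_le_two⟩

open scoped Nat

section

variable {E : Type*} [NormedAddCommGroup E] [InnerProductSpace ℂ E]

theorem anorm_of_apply_eq_smul {A : E →L[ℂ] E} {x : E} {r : ℝ} (h : A x = (r : ℂ) • x) :
    anorm A x = √r * ‖x‖ := by
  rw [anorm, reApplyInnerSelf_apply, h, inner_smul_left, inner_self_eq_norm_sq_to_K,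
    Complex.conj_ofReal]
  change √((↑r * ↑‖x‖ ^ 2 : ℂ).re) = _
  rw [← Complex.ofReal_pow, ← Complex.ofReal_mul, Complex.ofReal_re,
    Real.sqrt_mul' _ (sq_nonneg _), Real.sqrt_sq (norm_nonneg _)]

theorem not_ABounded_of_not_bddAbove {A T : E →L[ℂ] E} {x : ℕ → E} {s : ℕ → ℝ}
    (hx : ∀ n, 0 < anorm A (x n)) (hTx : ∀ n, anorm A (T (x n)) = s n * anorm A (x n))
    (hs : ¬ BddAbove (Set.range s)) : ¬ ABounded A T := by
  rintro ⟨c, -, hc⟩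
  refine hs ⟨c, ?_⟩
  rintro _ ⟨n, rfl⟩
  exact le_of_mul_le_mul_right (hTx n ▸ hc (x n)) (hx n)

end

theorem sqrt_inv_factorial_succ (n : ℕ) :
    √((n + 1)! : ℝ)⁻¹ = √((n : ℝ) + 2) * √((n + 2)! : ℝ)⁻¹ := by
  rw [← Real.sqrt_mul (by positivity), Nat.factorial_succ (n + 1)]
  congr 1
  push_cast
  field_simp
  ring

theorem not_bddAbove_range_sqrt_add_two :
    ¬ BddAbove (Set.range fun n : ℕ => √((n : ℝ) + 2)) := by
  rw [not_bddAbove_iff]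
  intro c
  obtain ⟨n, hn⟩ := exists_nat_gt (c ^ 2)
  exact ⟨_, ⟨n, rfl⟩, Real.lt_sqrt_of_sq_lt (by linarith)⟩

theorem anorm_lp_single_of_apply_eq_smul {ι : Type*} [DecidableEq ι]
    {A : lp (fun _ : ι => ℂ) 2 →L[ℂ] lp (fun _ : ι => ℂ) 2} {i : ι} {r : ℝ}
    (h : A (lp.single 2 i 1) = (r : ℂ) • lp.single 2 i 1) :
    anorm A (lp.single 2 i 1) = √r := by
  rw [anorm_of_apply_eq_smul h, lp.norm_single (by norm_num), norm_one, mul_one]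

/-- The canonical basis is indexed by `ℕ`, so `e_n` has eigenvalue `1/(n+1)!`. -/
theorem stmt1_general (A T : lp (fun _ : ℕ => ℂ) 2 →L[ℂ] lp (fun _ : ℕ => ℂ) 2)
    (hAe : ∀ n : ℕ, A (lp.single 2 n 1) = ((Nat.factorial (n + 1) : ℂ))⁻¹ • lp.single 2 n 1)
    (hTe : ∀ n : ℕ, T (lp.single 2 (n + 1) 1) = lp.single 2 n 1) :
    ¬ ABounded A T := by
  have hanorm (n : ℕ) : anorm A (lp.single 2 n 1) = √((n + 1)! : ℝ)⁻¹ :=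
    anorm_lp_single_of_apply_eq_smul (by rw [hAe]; push_cast; rfl)
  refine not_ABounded_of_not_bddAbove (x := fun n => lp.single 2 (n + 1) 1)
    (fun n => ?_) (fun n => ?_) not_bddAbove_range_sqrt_add_two
  · rw [hanorm]; positivity
  · rw [hTe, hanorm, hanorm, sqrt_inv_factorial_succ]

/-- on `ℓ²`, if `A` is the positive diagonal operator `A e_n = e_n / n!`
(indexing the canonical basis by `ℕ`, so `e_n` has eigenvalue `1/(n+1)!`) and `T` is the
backward shift, then `T` is not `A`-bounded. -/
theorem stmt1 (A T : lp (fun _ : ℕ => ℂ) 2 →L[ℂ] lp (fun _ : ℕ => ℂ) 2)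
    (hA : A.IsPositive)
    (hAe : ∀ n : ℕ, A (lp.single 2 n 1) = ((Nat.factorial (n + 1) : ℂ))⁻¹ • lp.single 2 n 1)
    (hT0 : T (lp.single 2 0 1) = 0)
    (hTe : ∀ n : ℕ, T (lp.single 2 (n + 1) 1) = lp.single 2 n 1) :
    ¬ ABounded A T :=
  stmt1_general A T hAe hTe
end

section
/- Let A be a positive operator on H and T, S A-bounded operators with TS = ST. Then r_A(T + S) ≤ r_A(T) + r_A(S) and r_A(TS) ≤ r_A(T) r_A(S), where r_A(X) = lim_n ‖X^n‖_A^{1/n}. -/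
/-! The `A`-operator seminorm is submultiplicative on `A`-bounded operators, so for every
`a > r_A(X)` there is `C` with `‖Xⁿ‖_A ≤ C aⁿ` for all `n`: pick `p` with `‖Xᵖ‖_A ≤ aᵖ` and peel
off factors `Xᵖ`. For commuting `T`, `S` the binomial theorem and `(TS)ⁿ = TⁿSⁿ` give
`‖(T + S)ⁿ‖_A ≤ C₁C₂(a + b)ⁿ` and `‖(TS)ⁿ‖_A ≤ C₁C₂(ab)ⁿ`; taking `n`-th roots and letting
`a ↓ r_A(T)`, `b ↓ r_A(S)` gives both inequalities. -/

open ContinuousLinearMap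

variable {H : Type*} [NormedAddCommGroup H] [InnerProductSpace ℂ H] [CompleteSpace H]

open Filter Topology Finset.HasAntidiagonal

-- `aSpecRad A X` is by definition `rootInf (fun n => aNorm A (X ^ n))`.
noncomputable def rootInf (u : ℕ → ℝ) : ℝ :=
  ⨅ n : ℕ+, u n ^ ((n : ℝ)⁻¹)

section rootInf

variable {u : ℕ → ℝ}

theorem rootInf_nonneg (hu : ∀ n, 0 ≤ u n) : 0 ≤ rootInf u :=
  Real.iInf_nonneg fun n => Real.rpow_nonneg (hu n) _

theorem rootInf_le (hu : ∀ n, 0 ≤ u n) (n : ℕ+) : rootInf u ≤ u n ^ ((n : ℝ)⁻¹) :=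
  ciInf_le (f := fun n : ℕ+ => u n ^ ((n : ℝ)⁻¹))
    ⟨0, Set.forall_mem_range.2 fun n => Real.rpow_nonneg (hu n) _⟩ n

theorem rootInf_le_of_le_mul_pow (hu : ∀ n, 0 ≤ u n) {C v : ℝ} (hv : 0 ≤ v)
    (h : ∀ n, u n ≤ C * v ^ n) : rootInf u ≤ v := by
  set C' := max C 1
  have hC' : 0 < C' := lt_max_of_lt_right one_pos
  have hroot (n : ℕ+) : rootInf u ≤ C' ^ ((n : ℝ)⁻¹) * v :=
    calc rootInf u ≤ u n ^ ((n : ℝ)⁻¹) := rootInf_le hu n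
      _ ≤ (C' * v ^ (n : ℕ)) ^ ((n : ℝ)⁻¹) := by
        gcongr
        · exact hu n
        · exact (h n).trans (by gcongr; exact le_max_left C 1)
      _ = C' ^ ((n : ℝ)⁻¹) * v := by
        rw [Real.mul_rpow hC'.le (by positivity), Real.pow_rpow_inv_natCast hv n.ne_zero]
  have hlim : Tendsto (fun n : ℕ => C' ^ (((n.succPNat : ℕ) : ℝ)⁻¹) * v) atTop (𝓝 v) := by
    have := (tendsto_const_nhds (x := C')).rpow tendsto_one_div_add_atTop_nhds_zero_nat
      (Or.inl hC'.ne') |>.mul_const v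
    simpa [Nat.succPNat_coe] using this
  exact ge_of_tendsto' hlim fun n => hroot n.succPNat

theorem exists_le_mul_pow_of_rootInf_lt (hu : ∀ n, 0 ≤ u n)
    (hmul : ∀ m n, u (m + n) ≤ u m * u n) {a : ℝ} (ha : rootInf u < a) :
    ∃ C, ∀ n, u n ≤ C * a ^ n := by
  have ha0 : 0 < a := (rootInf_nonneg hu).trans_lt ha
  obtain ⟨p, hp⟩ := exists_lt_of_ciInf_lt ha
  have hup : u p ≤ a ^ (p : ℕ) := by
    simpa using ((Real.rpow_inv_lt_iff_of_pos (hu p) ha0.le (by positivity)).1 hp).le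
  obtain ⟨C, hC⟩ : ∃ C, ∀ j < (p : ℕ), u j ≤ C * a ^ j :=
    ⟨∑ j ∈ Finset.range p, u j / a ^ j, fun j hj => (div_le_iff₀ (by positivity)).1 <|
      Finset.single_le_sum (fun i _ => div_nonneg (hu i) (by positivity)) (Finset.mem_range.2 hj)⟩
  refine ⟨C, fun n => ?_⟩
  induction n using Nat.strong_induction_on with
  | _ n ih =>
    rcases lt_or_ge n p with hn | hn
    · exact hC n hn
    obtain ⟨k, rfl⟩ := Nat.exists_eq_add_of_le hn
    calc u (p + k) ≤ u p * u k := hmul _ _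
      _ ≤ a ^ (p : ℕ) * (C * a ^ k) := mul_le_mul hup (ih k (by simp)) (hu k) (by positivity)
      _ = C * a ^ ((p : ℕ) + k) := by ring

end rootInf

theorem le_of_forall_pos_le_of_continuousAt {f : ℝ → ℝ} (hf : ContinuousAt f 0) {x : ℝ}
    (h : ∀ ε > 0, x ≤ f ε) : x ≤ f 0 :=
  ge_of_tendsto (hf.tendsto.mono_left nhdsWithin_le_nhds)
    (eventually_nhdsWithin_of_forall (s := Set.Ioi 0) h)

section Operator

omit [CompleteSpace H]

variable {A X Y : H →L[ℂ] H}

theorem anorm_nonneg (A : H →L[ℂ] H) (x : H) : 0 ≤ anorm A x := Real.sqrt_nonneg _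

theorem aNorm_nonneg (A X : H →L[ℂ] H) : 0 ≤ aNorm A X :=
  Real.sInf_nonneg fun _ hc => hc.1

theorem aNorm_le_bound {c : ℝ} (hc : 0 ≤ c) (h : ∀ x, anorm A (X x) ≤ c * anorm A x) :
    aNorm A X ≤ c :=
  csInf_le ⟨0, fun _ hb => hb.1⟩ ⟨hc, h⟩

theorem ABounded.anorm_apply_le (hX : ABounded A X) (x : H) :
    anorm A (X x) ≤ aNorm A X * anorm A x := by
  obtain ⟨c, hc, hb⟩ := hX
  have hclosed : IsClosed {c : ℝ | 0 ≤ c ∧ ∀ x, anorm A (X x) ≤ c * anorm A x} := by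
    simp only [Set.ofPred_and, Set.ofPred_forall]
    exact isClosed_Ici.inter <| isClosed_iInter fun x =>
      isClosed_le continuous_const (continuous_id.mul continuous_const)
  exact (hclosed.csInf_mem ⟨c, hc.le, hb⟩ ⟨0, fun _ hb => hb.1⟩).2 x

theorem ABounded.mul (hX : ABounded A X) (hY : ABounded A Y) : ABounded A (X * Y) := by
  obtain ⟨c, hc, hXc⟩ := hX
  obtain ⟨d, hd, hYd⟩ := hY
  refine ⟨c * d, mul_pos hc hd, fun x => ?_⟩
  calc anorm A (X (Y x)) ≤ c * anorm A (Y x) := hXc _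
    _ ≤ c * (d * anorm A x) := by gcongr; exact hYd x
    _ = c * d * anorm A x := by ring

theorem ABounded.pow (hX : ABounded A X) (n : ℕ) : ABounded A (X ^ n) := by
  induction n with
  | zero => exact ⟨1, one_pos, fun x => by simp⟩
  | succ n ih => rw [pow_succ]; exact ih.mul hX

theorem aNorm_mul_le (hX : ABounded A X) (hY : ABounded A Y) :
    aNorm A (X * Y) ≤ aNorm A X * aNorm A Y := by
  refine aNorm_le_bound (mul_nonneg (aNorm_nonneg A X) (aNorm_nonneg A Y)) fun x => ?_
  calc anorm A (X (Y x)) ≤ aNorm A X * anorm A (Y x) := hX.anorm_apply_le _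
    _ ≤ aNorm A X * (aNorm A Y * anorm A x) := by
        gcongr
        · exact aNorm_nonneg A X
        · exact hY.anorm_apply_le x
    _ = aNorm A X * aNorm A Y * anorm A x := by ring

theorem aSpecRad_nonneg (A X : H →L[ℂ] H) : 0 ≤ aSpecRad A X :=
  rootInf_nonneg fun _ => aNorm_nonneg A _

theorem aSpecRad_le_of_aNorm_pow_le {C v : ℝ} (hv : 0 ≤ v)
    (h : ∀ n, aNorm A (X ^ n) ≤ C * v ^ n) : aSpecRad A X ≤ v :=
  rootInf_le_of_le_mul_pow (fun _ => aNorm_nonneg A _) hv h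

theorem ABounded.exists_aNorm_pow_le (hX : ABounded A X) {a : ℝ} (ha : aSpecRad A X < a) :
    ∃ C, ∀ n, aNorm A (X ^ n) ≤ C * a ^ n :=
  exists_le_mul_pow_of_rootInf_lt (fun _ => aNorm_nonneg A _)
    (fun m n => pow_add X m n ▸ aNorm_mul_le (hX.pow m) (hX.pow n)) ha

theorem aSpecRad_mul_le (hX : ABounded A X) (hY : ABounded A Y) (hXY : Commute X Y) :
    aSpecRad A (X * Y) ≤ aSpecRad A X * aSpecRad A Y := by
  have hX0 := aSpecRad_nonneg A X
  have hY0 := aSpecRad_nonneg A Y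
  have key (ε : ℝ) (hε : 0 < ε) :
      aSpecRad A (X * Y) ≤ (aSpecRad A X + ε) * (aSpecRad A Y + ε) := by
    obtain ⟨C₁, h₁⟩ := hX.exists_aNorm_pow_le (lt_add_of_pos_right _ hε)
    obtain ⟨C₂, h₂⟩ := hY.exists_aNorm_pow_le (lt_add_of_pos_right _ hε)
    refine aSpecRad_le_of_aNorm_pow_le (C := C₁ * C₂) (by positivity) fun n => ?_
    calc aNorm A ((X * Y) ^ n) ≤ aNorm A (X ^ n) * aNorm A (Y ^ n) := by
          rw [hXY.mul_pow]; exact aNorm_mul_le (hX.pow n) (hY.pow n)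
      _ ≤ C₁ * (aSpecRad A X + ε) ^ n * (C₂ * (aSpecRad A Y + ε) ^ n) :=
          mul_le_mul (h₁ n) (h₂ n) (aNorm_nonneg A _) ((aNorm_nonneg A _).trans (h₁ n))
      _ = C₁ * C₂ * ((aSpecRad A X + ε) * (aSpecRad A Y + ε)) ^ n := by rw [mul_pow]; ring
  simpa using le_of_forall_pos_le_of_continuousAt
    (f := fun ε => (aSpecRad A X + ε) * (aSpecRad A Y + ε)) (by fun_prop) key

end Operator

section Positive

variable {A X Y : H →L[ℂ] H}

theorem anorm_eq_norm_sqrt (hA : A.IsPositive) (x : H) : anorm A x = ‖CFC.sqrt A x‖ := by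
  have hsa : IsSelfAdjoint (CFC.sqrt A) :=
    ((nonneg_iff_isPositive _).mp (CFC.sqrt_nonneg A)).isSelfAdjoint
  have hA_eq : A x = CFC.sqrt A (CFC.sqrt A x) :=
    congrArg (· x) (CFC.sqrt_mul_sqrt_self A ((nonneg_iff_isPositive A).mpr hA)).symm
  have hsym := adjoint_inner_right (CFC.sqrt A) x (CFC.sqrt A x)
  rw [hsa.adjoint_eq] at hsym
  have hre : A.reApplyInnerSelf x = ‖CFC.sqrt A x‖ ^ 2 := by
    rw [reApplyInnerSelf_apply, hA_eq, inner_re_symm, hsym, inner_self_eq_norm_sq]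
  rw [anorm, hre, Real.sqrt_sq (norm_nonneg _)]

theorem anorm_sum_le (hA : A.IsPositive) {ι : Type*} (s : Finset ι) (f : ι → H) :
    anorm A (∑ i ∈ s, f i) ≤ ∑ i ∈ s, anorm A (f i) := by
  simp only [anorm_eq_norm_sqrt hA, map_sum]
  exact norm_sum_le _ _

theorem anorm_nsmul (hA : A.IsPositive) (n : ℕ) (x : H) : anorm A (n • x) = n * anorm A x := by
  rw [anorm_eq_norm_sqrt hA, anorm_eq_norm_sqrt hA, map_nsmul, ← Nat.cast_smul_eq_nsmul ℝ,
    norm_smul, Real.norm_natCast]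

theorem aNorm_add_pow_le (hA : A.IsPositive) (hX : ABounded A X) (hY : ABounded A Y)
    (hXY : Commute X Y) (n : ℕ) :
    aNorm A ((X + Y) ^ n) ≤
      ∑ m ∈ antidiagonal n, n.choose m.1 • (aNorm A (X ^ m.1) * aNorm A (Y ^ m.2)) := by
  refine aNorm_le_bound (Finset.sum_nonneg fun m _ =>
    nsmul_nonneg (mul_nonneg (aNorm_nonneg A _) (aNorm_nonneg A _)) _) fun x => ?_
  rw [hXY.add_pow', sum_apply, Finset.sum_mul]
  refine (anorm_sum_le hA _ _).trans (Finset.sum_le_sum fun m _ => ?_)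
  rw [smul_apply, anorm_nsmul hA, nsmul_eq_mul, mul_assoc]
  gcongr
  calc anorm A ((X ^ m.1 * Y ^ m.2) x)
      ≤ aNorm A (X ^ m.1 * Y ^ m.2) * anorm A x := ((hX.pow _).mul (hY.pow _)).anorm_apply_le x
    _ ≤ aNorm A (X ^ m.1) * aNorm A (Y ^ m.2) * anorm A x := by
        gcongr
        · exact anorm_nonneg A x
        · exact aNorm_mul_le (hX.pow _) (hY.pow _)

theorem aSpecRad_add_le (hA : A.IsPositive) (hX : ABounded A X) (hY : ABounded A Y)
    (hXY : Commute X Y) : aSpecRad A (X + Y) ≤ aSpecRad A X + aSpecRad A Y := by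
  have hX0 := aSpecRad_nonneg A X
  have hY0 := aSpecRad_nonneg A Y
  have key (ε : ℝ) (hε : 0 < ε) :
      aSpecRad A (X + Y) ≤ (aSpecRad A X + ε) + (aSpecRad A Y + ε) := by
    obtain ⟨C₁, h₁⟩ := hX.exists_aNorm_pow_le (lt_add_of_pos_right _ hε)
    obtain ⟨C₂, h₂⟩ := hY.exists_aNorm_pow_le (lt_add_of_pos_right _ hε)
    refine aSpecRad_le_of_aNorm_pow_le (C := C₁ * C₂) (by linarith) fun n => ?_
    calc aNorm A ((X + Y) ^ n)
        ≤ ∑ m ∈ antidiagonal n, n.choose m.1 • (aNorm A (X ^ m.1) * aNorm A (Y ^ m.2)) :=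
          aNorm_add_pow_le hA hX hY hXY n
      _ ≤ ∑ m ∈ antidiagonal n,
            n.choose m.1 • (C₁ * (aSpecRad A X + ε) ^ m.1 * (C₂ * (aSpecRad A Y + ε) ^ m.2)) :=
          Finset.sum_le_sum fun m _ => nsmul_le_nsmul_right
            (mul_le_mul (h₁ _) (h₂ _) (aNorm_nonneg A _) ((aNorm_nonneg A _).trans (h₁ _))) _
      _ = C₁ * C₂ * ((aSpecRad A X + ε) + (aSpecRad A Y + ε)) ^ n := by
          rw [(Commute.all _ _).add_pow', Finset.mul_sum]
          refine Finset.sum_congr rfl fun m _ => ?_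
          simp only [nsmul_eq_mul]
          ring
  simpa using le_of_forall_pos_le_of_continuousAt
    (f := fun ε => (aSpecRad A X + ε) + (aSpecRad A Y + ε)) (by fun_prop) key

end Positive

/-- for commuting `A`-bounded operators,
`r_A(T + S) ≤ r_A(T) + r_A(S)` and `r_A(TS) ≤ r_A(T) r_A(S)`. -/
theorem stmt4 (A T S : H →L[ℂ] H) (hA : A.IsPositive)
    (hT : ABounded A T) (hS : ABounded A S) (hc : T * S = S * T) :
    aSpecRad A (T + S) ≤ aSpecRad A T + aSpecRad A S ∧
      aSpecRad A (T * S) ≤ aSpecRad A T * aSpecRad A S :=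
  ⟨aSpecRad_add_le hA hT hS hc, aSpecRad_mul_le hT hS hc⟩
end
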